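/- For the central element Ω = q⁻²xyz + (q⁻²γ/(q²−1))x − (q²β/(q²−1))y + (q⁻²α/(q²−1))z of A(α,β,γ) and any n ≥ 1, when Ω^n is expressed in the PBW basis {x^a y^b z^c} ordered by total degree, its leading term is q^{−n(n+1)} x^n y^n z^n (i.e., the coefficient of x^n y^n z^n in Ω^n is (q^{−2})^{n(n+1)/2}, and all other terms have total degree less than 3n). -/

import Mathlib

noncomputable section

open FreeAlgebra

/-- The defining relations of the 3-cyclic quantum Weyl algebra `A(α,β,γ)`:
`xy = q²yx + α`, `xz = q⁻²zx + β`, `yz = q²zy + γ`. -/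
inductive CQWRel (K : Type) [Field K] (q α β γ : K) :
    FreeAlgebra K (Fin 3) → FreeAlgebra K (Fin 3) → Prop
  | xy : CQWRel K q α β γ (ι K (0 : Fin 3) * ι K 1)
      (q ^ 2 • (ι K (1 : Fin 3) * ι K 0) + algebraMap K _ α)
  | xz : CQWRel K q α β γ (ι K (0 : Fin 3) * ι K 2)
      (q⁻¹ ^ 2 • (ι K (2 : Fin 3) * ι K 0) + algebraMap K _ β)
  | yz : CQWRel K q α β γ (ι K (1 : Fin 3) * ι K 2)
      (q ^ 2 • (ι K (2 : Fin 3) * ι K 1) + algebraMap K _ γ)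

/-- The 3-cyclic quantum Weyl algebra `A(α,β,γ)`. -/
abbrev CQW (K : Type) [Field K] (q α β γ : K) := RingQuot (CQWRel K q α β γ)

variable {K : Type} [Field K]

/-- The generator `x` of `A(α,β,γ)`. -/
def Xg (q α β γ : K) : CQW K q α β γ := RingQuot.mkAlgHom K (CQWRel K q α β γ) (ι K 0)

/-- The generator `y` of `A(α,β,γ)`. -/
def Yg (q α β γ : K) : CQW K q α β γ := RingQuot.mkAlgHom K (CQWRel K q α β γ) (ι K 1)

/-- The generator `z` of `A(α,β,γ)`. -/
def Zg (q α β γ : K) : CQW K q α β γ := RingQuot.mkAlgHom K (CQWRel K q α β γ) (ι K 2)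

/-- The central element `Ω = q⁻²xyz + (q⁻²γ/(q²-1))x - (q²β/(q²-1))y + (q⁻²α/(q²-1))z`
of `A(α,β,γ)`, written in the ordering `x < y < z`. -/
def OmegaElt' (q α β γ : K) : CQW K q α β γ :=
  q⁻¹ ^ 2 • (Xg q α β γ * Yg q α β γ * Zg q α β γ) +
    (q⁻¹ ^ 2 * γ / (q ^ 2 - 1)) • Xg q α β γ - (q ^ 2 * β / (q ^ 2 - 1)) • Yg q α β γ +
    (q⁻¹ ^ 2 * α / (q ^ 2 - 1)) • Zg q α β γ


/-! Let `F_d` be the span of the PBW monomials `xᵃyᵇzᶜ` of total degree `a + b + c < d`. Each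
relation reorders two generators at the cost of a scalar and a constant term, so right
multiplication by `x`, `y` or `z` maps `F_d` into `F_{d+1}`, and modulo `F_{a+b+c+1}` it sends
`xᵃyᵇzᶜ` to a scalar multiple of the monomial with one exponent raised. Tracking these scalars,
`xᵃyᵇzᶜ · Ω ≡ q^{-2(b+1)} xᵃ⁺¹yᵇ⁺¹zᶜ⁺¹ mod F_{a+b+c+3}`, and induction on `n` gives
`Ωⁿ ≡ q^{-2(1+⋯+n)} xⁿyⁿzⁿ = q^{-n(n+1)} xⁿyⁿzⁿ mod F_{3n}`. -/

theorem exists_pow_mul_eq_of_mul_eq {R A : Type*} [CommSemiring R] [Semiring A] [Algebra R A]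
    {x y : A} {s t : R} (h : y * x = s • (x * y) + t • 1) :
    ∀ b : ℕ, ∃ r : R, y ^ b * x = s ^ b • (x * y ^ b) + r • y ^ (b - 1)
  | 0 => ⟨0, by simp⟩
  | 1 => ⟨t, by simpa using h⟩
  | b + 2 => by
    obtain ⟨r, hr⟩ := exists_pow_mul_eq_of_mul_eq h (b + 1)
    refine ⟨s ^ (b + 1) * t + r, ?_⟩
    calc y ^ (b + 2) * x = y * (y ^ (b + 1) * x) := by rw [pow_succ' y (b + 1), mul_assoc]
      _ = s ^ (b + 1) • ((y * x) * y ^ (b + 1)) + r • (y * y ^ b) := by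
        rw [hr, mul_add, mul_smul_comm, mul_smul_comm, ← mul_assoc]; rfl
      _ = s ^ (b + 2) • (x * y ^ (b + 2)) + (s ^ (b + 1) * t + r) • y ^ (b + 1) := by
        rw [h, add_mul, smul_mul_assoc, smul_mul_assoc, mul_assoc, ← pow_succ', ← pow_succ',
          one_mul]
        module

section PBW

variable {q α β γ : K}

local notation "X" => Xg q α β γ
local notation "Y" => Yg q α β γ
local notation "Z" => Zg q α β γ
local notation "Ω" => OmegaElt' q α β γ

theorem Xg_mul_Yg : X * Y = q ^ 2 • (Y * X) + α • (1 : CQW K q α β γ) := by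
  simpa [Xg, Yg, Algebra.algebraMap_eq_smul_one] using
    RingQuot.mkAlgHom_rel K (CQWRel.xy (q := q) (α := α) (β := β) (γ := γ))

theorem Xg_mul_Zg : X * Z = q⁻¹ ^ 2 • (Z * X) + β • (1 : CQW K q α β γ) := by
  simpa [Xg, Zg, Algebra.algebraMap_eq_smul_one] using
    RingQuot.mkAlgHom_rel K (CQWRel.xz (q := q) (α := α) (β := β) (γ := γ))

theorem Yg_mul_Zg : Y * Z = q ^ 2 • (Z * Y) + γ • (1 : CQW K q α β γ) := by
  simpa [Yg, Zg, Algebra.algebraMap_eq_smul_one] using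
    RingQuot.mkAlgHom_rel K (CQWRel.yz (q := q) (α := α) (β := β) (γ := γ))

theorem Yg_mul_Xg (hq : q ≠ 0) :
    Y * X = q⁻¹ ^ 2 • (X * Y) + (-(q⁻¹ ^ 2 * α)) • (1 : CQW K q α β γ) := by
  rw [Xg_mul_Yg]
  match_scalars <;> simp [hq]

theorem Zg_mul_Xg (hq : q ≠ 0) :
    Z * X = q ^ 2 • (X * Z) + (-(q ^ 2 * β)) • (1 : CQW K q α β γ) := by
  rw [Xg_mul_Zg]
  match_scalars <;> simp [hq]

theorem Zg_mul_Yg (hq : q ≠ 0) :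
    Z * Y = q⁻¹ ^ 2 • (Y * Z) + (-(q⁻¹ ^ 2 * γ)) • (1 : CQW K q α β γ) := by
  rw [Yg_mul_Zg]
  match_scalars <;> simp [hq]

variable (q α β γ) in
def pbwMonomial (a b c : ℕ) : CQW K q α β γ := X ^ a * Y ^ b * Z ^ c

variable (q α β γ) in
def pbwSpanBelow (d : ℕ) : Submodule K (CQW K q α β γ) :=
  Submodule.span K ((fun p : ℕ × ℕ × ℕ => pbwMonomial q α β γ p.1 p.2.1 p.2.2) ''
    {p | p.1 + p.2.1 + p.2.2 < d})

local notation "𝓜" => pbwMonomial q α β γ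
local notation "𝓕" => pbwSpanBelow q α β γ

theorem pbwSpanBelow_mono {d e : ℕ} (h : d ≤ e) : 𝓕 d ≤ 𝓕 e :=
  Submodule.span_mono (Set.image_mono fun _ hp => lt_of_lt_of_le hp h)

theorem pbwMonomial_mem_pbwSpanBelow {a b c d : ℕ} (h : a + b + c < d) : 𝓜 a b c ∈ 𝓕 d :=
  Submodule.subset_span ⟨(a, b, c), h, rfl⟩

theorem pbwMonomial_mul_Zg (a b c : ℕ) : 𝓜 a b c * Z = 𝓜 a b (c + 1) := by
  rw [pbwMonomial, pbwMonomial, pow_succ, mul_assoc]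

theorem pbwMonomial_mul_Yg_sub_mem (hq : q ≠ 0) (a b c : ℕ) :
    𝓜 a b c * Y - (q⁻¹ ^ 2) ^ c • 𝓜 a (b + 1) c ∈ 𝓕 (a + b + c + 1) := by
  obtain ⟨r, hr⟩ := exists_pow_mul_eq_of_mul_eq (Zg_mul_Yg (α := α) (β := β) (γ := γ) hq) c
  have : 𝓜 a b c * Y - (q⁻¹ ^ 2) ^ c • 𝓜 a (b + 1) c = r • 𝓜 a b (c - 1) := by
    rw [pbwMonomial, pbwMonomial, pbwMonomial, pow_succ Y b, mul_assoc, mul_assoc, hr]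
    simp only [mul_add, mul_smul_comm, mul_assoc]
    abel
  rw [this]
  exact Submodule.smul_mem _ _ (pbwMonomial_mem_pbwSpanBelow (by omega))

theorem pbwMonomial_mul_Xg_sub_mem (hq : q ≠ 0) (a b c : ℕ) :
    𝓜 a b c * X - ((q ^ 2) ^ c * (q⁻¹ ^ 2) ^ b) • 𝓜 (a + 1) b c ∈ 𝓕 (a + b + c + 1) := by
  obtain ⟨r, hr⟩ := exists_pow_mul_eq_of_mul_eq (Zg_mul_Xg (α := α) (β := β) (γ := γ) hq) c
  obtain ⟨r', hr'⟩ := exists_pow_mul_eq_of_mul_eq (Yg_mul_Xg (α := α) (β := β) (γ := γ) hq) b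
  have : 𝓜 a b c * X - ((q ^ 2) ^ c * (q⁻¹ ^ 2) ^ b) • 𝓜 (a + 1) b c =
      ((q ^ 2) ^ c * r') • 𝓜 a (b - 1) c + r • 𝓜 a b (c - 1) := by
    simp only [pbwMonomial, mul_assoc, hr, mul_add, mul_smul_comm]
    rw [← mul_assoc (Y ^ b), hr']
    simp only [add_mul, smul_mul_assoc, mul_add, mul_smul_comm, pow_succ, mul_assoc]
    module
  rw [this]
  exact add_mem (Submodule.smul_mem _ _ (pbwMonomial_mem_pbwSpanBelow (by omega)))
    (Submodule.smul_mem _ _ (pbwMonomial_mem_pbwSpanBelow (by omega)))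

theorem mul_mem_pbwSpanBelow {w : CQW K q α β γ} {k : ℕ}
    (hw : ∀ a b c, 𝓜 a b c * w ∈ 𝓕 (a + b + c + 1 + k)) {u : CQW K q α β γ} {d : ℕ}
    (hu : u ∈ 𝓕 d) : u * w ∈ 𝓕 (d + k) := by
  induction hu using Submodule.span_induction with
  | mem v hv =>
    obtain ⟨⟨a, b, c⟩, hp, rfl⟩ := hv
    exact pbwSpanBelow_mono (by simp only [Set.mem_ofPred_eq] at hp; omega) (hw a b c)
  | zero => simp
  | add x y _ _ hx hy => rw [add_mul]; exact add_mem hx hy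
  | smul s x _ hx => rw [smul_mul_assoc]; exact Submodule.smul_mem _ _ hx

theorem mul_Xg_mem_pbwSpanBelow (hq : q ≠ 0) {u : CQW K q α β γ} {d : ℕ} (hu : u ∈ 𝓕 d) :
    u * X ∈ 𝓕 (d + 1) :=
  mul_mem_pbwSpanBelow (fun a b c =>
    (Submodule.sub_mem_iff_left _
      (Submodule.smul_mem _ _ (pbwMonomial_mem_pbwSpanBelow (by omega)))).mp
      (pbwSpanBelow_mono (by omega) (pbwMonomial_mul_Xg_sub_mem hq a b c))) hu

theorem mul_Yg_mem_pbwSpanBelow (hq : q ≠ 0) {u : CQW K q α β γ} {d : ℕ} (hu : u ∈ 𝓕 d) :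
    u * Y ∈ 𝓕 (d + 1) :=
  mul_mem_pbwSpanBelow (fun a b c =>
    (Submodule.sub_mem_iff_left _
      (Submodule.smul_mem _ _ (pbwMonomial_mem_pbwSpanBelow (by omega)))).mp
      (pbwSpanBelow_mono (by omega) (pbwMonomial_mul_Yg_sub_mem hq a b c))) hu

theorem mul_Zg_mem_pbwSpanBelow {u : CQW K q α β γ} {d : ℕ} (hu : u ∈ 𝓕 d) :
    u * Z ∈ 𝓕 (d + 1) :=
  mul_mem_pbwSpanBelow (fun a b c => by
    rw [pbwMonomial_mul_Zg]; exact pbwMonomial_mem_pbwSpanBelow (by omega)) hu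

theorem mul_OmegaElt'_mem_pbwSpanBelow (hq : q ≠ 0) {u : CQW K q α β γ} {d : ℕ}
    (hu : u ∈ 𝓕 d) : u * Ω ∈ 𝓕 (d + 3) := by
  have hX := mul_Xg_mem_pbwSpanBelow hq hu
  have hY := mul_Yg_mem_pbwSpanBelow hq hu
  have hZ := mul_Zg_mem_pbwSpanBelow hu
  have hXYZ : u * (X * Y * Z) ∈ 𝓕 (d + 3) := by
    rw [← mul_assoc, ← mul_assoc]
    exact mul_Zg_mem_pbwSpanBelow (mul_Yg_mem_pbwSpanBelow hq hX)
  simp only [OmegaElt', mul_add, mul_sub, mul_smul_comm]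
  refine add_mem (sub_mem (add_mem ?_ ?_) ?_) ?_ <;> refine Submodule.smul_mem _ _ ?_
  exacts [hXYZ, pbwSpanBelow_mono (by omega) hX, pbwSpanBelow_mono (by omega) hY,
    pbwSpanBelow_mono (by omega) hZ]

theorem pbwMonomial_mul_XYZ_sub_mem (hq : q ≠ 0) (a b c : ℕ) :
    𝓜 a b c * (X * Y * Z) - (q⁻¹ ^ 2) ^ b • 𝓜 (a + 1) (b + 1) (c + 1) ∈
      𝓕 (a + b + c + 3) := by
  set s := (q ^ 2) ^ c * (q⁻¹ ^ 2) ^ b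
  have hs : s * (q⁻¹ ^ 2) ^ c = (q⁻¹ ^ 2) ^ b := by
    rw [mul_right_comm, ← mul_pow, ← mul_pow, mul_inv_cancel₀ hq, one_pow, one_pow, one_mul]
  have key : 𝓜 a b c * (X * Y * Z) - (q⁻¹ ^ 2) ^ b • 𝓜 (a + 1) (b + 1) (c + 1) =
      ((𝓜 a b c * X - s • 𝓜 (a + 1) b c) * Y +
        s • (𝓜 (a + 1) b c * Y - (q⁻¹ ^ 2) ^ c • 𝓜 (a + 1) (b + 1) c)) * Z := by
    rw [← hs, ← pbwMonomial_mul_Zg]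
    simp only [sub_mul, add_mul, smul_sub, smul_mul_assoc, smul_smul, mul_assoc]
    abel
  rw [key]
  refine mul_Zg_mem_pbwSpanBelow
    (add_mem (mul_Yg_mem_pbwSpanBelow hq (pbwMonomial_mul_Xg_sub_mem hq a b c)) ?_)
  exact Submodule.smul_mem _ _
    (pbwSpanBelow_mono (by omega) (pbwMonomial_mul_Yg_sub_mem hq (a + 1) b c))

theorem pbwMonomial_mul_OmegaElt'_sub_mem (hq : q ≠ 0) (a b c : ℕ) :
    𝓜 a b c * Ω - (q⁻¹ ^ 2) ^ (b + 1) • 𝓜 (a + 1) (b + 1) (c + 1) ∈ 𝓕 (a + b + c + 3) := by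
  have hM : 𝓜 a b c ∈ 𝓕 (a + b + c + 1) := pbwMonomial_mem_pbwSpanBelow (by omega)
  have key : 𝓜 a b c * Ω - (q⁻¹ ^ 2) ^ (b + 1) • 𝓜 (a + 1) (b + 1) (c + 1) =
      q⁻¹ ^ 2 • (𝓜 a b c * (X * Y * Z) - (q⁻¹ ^ 2) ^ b • 𝓜 (a + 1) (b + 1) (c + 1)) +
        ((q⁻¹ ^ 2 * γ / (q ^ 2 - 1)) • (𝓜 a b c * X) -
          (q ^ 2 * β / (q ^ 2 - 1)) • (𝓜 a b c * Y) +
          (q⁻¹ ^ 2 * α / (q ^ 2 - 1)) • (𝓜 a b c * Z)) := by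
    simp only [OmegaElt', mul_add, mul_sub, mul_smul_comm]
    module
  rw [key]
  have hX : 𝓜 a b c * X ∈ 𝓕 (a + b + c + 3) :=
    pbwSpanBelow_mono (by omega) (mul_Xg_mem_pbwSpanBelow hq hM)
  have hY : 𝓜 a b c * Y ∈ 𝓕 (a + b + c + 3) :=
    pbwSpanBelow_mono (by omega) (mul_Yg_mem_pbwSpanBelow hq hM)
  have hZ : 𝓜 a b c * Z ∈ 𝓕 (a + b + c + 3) :=
    pbwSpanBelow_mono (by omega) (mul_Zg_mem_pbwSpanBelow hM)
  exact add_mem (Submodule.smul_mem _ _ (pbwMonomial_mul_XYZ_sub_mem hq a b c))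
    (add_mem (sub_mem (Submodule.smul_mem _ _ hX) (Submodule.smul_mem _ _ hY))
      (Submodule.smul_mem _ _ hZ))

theorem OmegaElt'_pow_sub_mem (hq : q ≠ 0) (n : ℕ) :
    Ω ^ n - q⁻¹ ^ (n * (n + 1)) • 𝓜 n n n ∈ 𝓕 (3 * n) := by
  induction n with
  | zero => simp [pbwMonomial]
  | succ n ih =>
    have key : Ω ^ (n + 1) - q⁻¹ ^ ((n + 1) * (n + 1 + 1)) • 𝓜 (n + 1) (n + 1) (n + 1) =
        (Ω ^ n - q⁻¹ ^ (n * (n + 1)) • 𝓜 n n n) * Ω + q⁻¹ ^ (n * (n + 1)) •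
          (𝓜 n n n * Ω - (q⁻¹ ^ 2) ^ (n + 1) • 𝓜 (n + 1) (n + 1) (n + 1)) := by
      rw [pow_succ]
      simp only [sub_mul, smul_sub, smul_mul_assoc, smul_smul]
      match_scalars <;> ring
    rw [key]
    exact add_mem (mul_OmegaElt'_mem_pbwSpanBelow hq ih)
      (Submodule.smul_mem _ _
        (pbwSpanBelow_mono (by omega) (pbwMonomial_mul_OmegaElt'_sub_mem hq n n n)))

end PBW

theorem stmt19_general (q α β γ : K) (hq : q ≠ 0) (n : ℕ) :
    ∃ c : (ℕ × ℕ × ℕ) →₀ K,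
      (∀ p ∈ c.support, p.1 + p.2.1 + p.2.2 < 3 * n) ∧
      OmegaElt' q α β γ ^ n =
        (q⁻¹ ^ (n * (n + 1))) • (Xg q α β γ ^ n * Yg q α β γ ^ n * Zg q α β γ ^ n) +
          c.sum fun p coeff => coeff • (Xg q α β γ ^ p.1 * Yg q α β γ ^ p.2.1 *
            Zg q α β γ ^ p.2.2) := by
  obtain ⟨c, hc, hsum⟩ := (Finsupp.mem_span_image_iff_linearCombination K).mp
    (OmegaElt'_pow_sub_mem (α := α) (β := β) (γ := γ) hq n)
  refine ⟨c, fun p hp => hc hp, ?_⟩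
  rw [← sub_eq_iff_eq_add']
  exact hsum.symm

/-- For any `n ≥ 1`, expressed in the PBW monomials `xᵃyᵇzᶜ`, the leading term of `Ωⁿ` is
`(q⁻²)^{n(n+1)/2} xⁿyⁿzⁿ = q^{-n(n+1)} xⁿyⁿzⁿ`: all other terms have total degree `< 3n`. -/
theorem stmt19 (q α β γ : K) (hq : q ≠ 0) (hq2 : q ^ 2 ≠ 1) (n : ℕ) (hn : 1 ≤ n) :
    ∃ c : (ℕ × ℕ × ℕ) →₀ K,
      (∀ p ∈ c.support, p.1 + p.2.1 + p.2.2 < 3 * n) ∧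
      OmegaElt' q α β γ ^ n =
        (q⁻¹ ^ (n * (n + 1))) • (Xg q α β γ ^ n * Yg q α β γ ^ n * Zg q α β γ ^ n) +
          c.sum fun p coeff => coeff • (Xg q α β γ ^ p.1 * Yg q α β γ ^ p.2.1 *
            Zg q α β γ ^ p.2.2) :=
  stmt19_general q α β γ hq n
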